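/- Let k₁, k₂ be real numbers with 0 < k₁ < k₂, and let g(z₁,z₂) = k₁⁴·z₁⁴ + 4k₂(k₁ − k₂)·z₂² + 2k₁³k₂·z₁²·z₂² + k₁²k₂²·z₂⁴ ∈ ℂ[z₁,z₂] (so that g = 4k₁²·Ψ(0,0,1/k₁,1/k₁,z) is, up to the nonzero constant 4k₁², the phase function of F = −(k₁z₁²+k₂z₂²)/2 at the focal point). Then the quotient ring ℂ[z₁,z₂]/J(g) is a ℂ-vector space of dimension exactly 5; i.e. the global Milnor number μ at the focal point equals 5. -/

import Mathlib

open MvPolynomial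

/-- The Jacobian ideal of a polynomial: the ideal generated by its partial derivatives. -/
noncomputable def jacobianIdeal (g : MvPolynomial (Fin 2) ℂ) :
    Ideal (MvPolynomial (Fin 2) ℂ) :=
  Ideal.span (Set.range fun i => pderiv i g)

/-!
Write `a = k₁`, `b = k₂`. The partials are `∂₁g = 4a³z₁(az₁² + bz₂²)` and
`∂₂g = 4bz₂(2(a − b) + a³z₁² + a²bz₂²)`, and `az₁∂₂g − bz₂∂₁g = 8ab(a − b)z₁z₂`.
As `a ≠ b`, this gives `J(g) = (z₁z₂, z₁³, z₂³ + cz₂)` with `a²bc = 2(a − b)`.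
Modulo this ideal every monomial reduces to one of `1, z₁, z₁², z₂, z₂²`. These five are
linearly independent in the quotient: restriction to the axis `z₂ = 0` (resp. `z₁ = 0`) maps
the ideal into `(z₁³)` (resp. `(z₂³ + cz₂)`), which contains no nonzero polynomial of
degree `< 3`.
-/

noncomputable section

namespace Polynomial

lemma coeffs_eq_zero_of_dvd_quadratic {K : Type*} [Field K] {p : K[X]} (hp : 2 < p.degree)
    {a b d : K} (h : p ∣ C a + C b * X + C d * X ^ 2) : a = 0 ∧ b = 0 ∧ d = 0 := by
  have hq : C a + C b * X + C d * X ^ 2 = 0 := by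
    refine eq_zero_of_dvd_of_degree_lt h (lt_of_le_of_lt ?_ hp)
    rw [show C a + C b * X + C d * X ^ 2 = C d * X ^ 2 + C b * X + C a by ring]
    exact degree_quadratic_le
  refine ⟨?_, ?_, ?_⟩
  · simpa using congrArg (coeff · 0) hq
  · simpa using congrArg (coeff · 1) hq
  · simpa using congrArg (coeff · 2) hq

end Polynomial

section FocalIdeal

variable {K : Type*} [Field K] (c : K)

def focalIdeal : Ideal (MvPolynomial (Fin 2) K) :=
  Ideal.span {X 0 * X 1, X 0 ^ 3, X 1 ^ 3 + C c * X 1}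

variable {c} in
lemma focalIdeal_le_iff {I : Ideal (MvPolynomial (Fin 2) K)} :
    focalIdeal c ≤ I ↔ X 0 * X 1 ∈ I ∧ X 0 ^ 3 ∈ I ∧ X 1 ^ 3 + C c * X 1 ∈ I := by
  simp [focalIdeal, Ideal.span_le, Set.insert_subset_iff]

lemma X_pow_three_dvd_aeval_of_mem_focalIdeal {p : MvPolynomial (Fin 2) K}
    (hp : p ∈ focalIdeal c) :
    (Polynomial.X ^ 3 : Polynomial K) ∣ aeval ![Polynomial.X, 0] p := by
  have : focalIdeal c ≤ (Ideal.span {(Polynomial.X ^ 3 : Polynomial K)}).comap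
      (aeval ![Polynomial.X, 0]) := by
    simp [focalIdeal_le_iff]
  exact Ideal.mem_span_singleton.1 (this hp)

lemma X_pow_three_add_C_mul_X_dvd_aeval_of_mem_focalIdeal {p : MvPolynomial (Fin 2) K}
    (hp : p ∈ focalIdeal c) :
    Polynomial.X ^ 3 + Polynomial.C c * Polynomial.X ∣
      aeval ![0, (Polynomial.X : Polynomial K)] p := by
  have : focalIdeal c ≤ (Ideal.span {Polynomial.X ^ 3 + Polynomial.C c * Polynomial.X}).comap
      (aeval ![0, (Polynomial.X : Polynomial K)]) := by
    simp [focalIdeal_le_iff]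
  exact Ideal.mem_span_singleton.1 (this hp)

lemma mul_mem_span_of_relations {A : Type*} [CommRing A] [Algebra K A] {x y : A}
    (hxy : x * y = 0) (hx3 : x ^ 3 = 0) (hy3 : y ^ 3 + c • y = 0) {w : A}
    (hw : w ∈ Submodule.span K (Set.range ![1, x, x ^ 2, y, y ^ 2])) (n : Fin 2) :
    w * ![x, y] n ∈ Submodule.span K (Set.range ![1, x, x ^ 2, y, y ^ 2]) := by
  set W := Submodule.span K (Set.range ![1, x, x ^ 2, y, y ^ 2])
  have hv (i) : ![1, x, x ^ 2, y, y ^ 2] i ∈ W := Submodule.subset_span ⟨i, rfl⟩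
  induction hw using Submodule.span_induction with
  | mem w hw =>
    obtain ⟨i, rfl⟩ := hw
    fin_cases i <;> fin_cases n <;> simp only [Fin.zero_eta, Fin.mk_one, Fin.reduceFinMk,
      Matrix.cons_val, one_mul, ← sq, ← pow_succ]
    · exact hv 1
    · exact hv 3
    · exact hv 2
    · simp [hxy]
    · simp [hx3]
    · simp [sq, mul_assoc, hxy]
    · simp [mul_comm y, hxy]
    · exact hv 4
    · simp [sq, mul_assoc, mul_comm y x, hxy]
    · simpa [eq_neg_of_add_eq_zero_left hy3] using W.smul_mem (-c) (hv 3)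
  | zero => simp
  | add _ _ _ _ h₁ h₂ => rw [add_mul]; exact add_mem h₁ h₂
  | smul a _ _ h => rw [smul_mul_assoc]; exact W.smul_mem a h

def focalMonomial : Fin 5 → MvPolynomial (Fin 2) K :=
  ![1, X 0, X 0 ^ 2, X 1, X 1 ^ 2]

lemma span_range_mk_focalMonomial :
    Submodule.span K (Set.range (Ideal.Quotient.mkₐ K (focalIdeal c) ∘ focalMonomial)) = ⊤ := by
  set π := Ideal.Quotient.mkₐ K (focalIdeal c)
  have hzero {p} (hp : p ∈ focalIdeal c) : π p = 0 := by
    rwa [Ideal.Quotient.mkₐ_eq_mk, Ideal.Quotient.eq_zero_iff_mem]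
  obtain ⟨hxy, hx3, hy3⟩ := focalIdeal_le_iff.1 (le_refl (focalIdeal c))
  replace hxy : π (X 0) * π (X 1) = 0 := by rw [← map_mul, hzero hxy]
  replace hx3 : π (X 0) ^ 3 = 0 := by rw [← map_pow, hzero hx3]
  replace hy3 : π (X 1) ^ 3 + c • π (X 1) = 0 := by
    rw [← map_pow, ← map_smul, ← map_add, smul_eq_C_mul, hzero hy3]
  have hv : π ∘ focalMonomial = ![1, π (X 0), π (X 0) ^ 2, π (X 1), π (X 1) ^ 2] := by
    ext i; fin_cases i <;> simp [focalMonomial]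
  rw [hv, Submodule.eq_top_iff']
  intro w
  obtain ⟨p, rfl⟩ := Ideal.Quotient.mkₐ_surjective K _ w
  induction p using MvPolynomial.induction_on with
  | C a =>
    rw [← mul_one (C a), ← smul_eq_C_mul, map_smul, map_one]
    exact Submodule.smul_mem _ a (Submodule.subset_span ⟨0, rfl⟩)
  | add p q hp hq => rw [map_add]; exact add_mem hp hq
  | mul_X p n hp =>
    rw [map_mul, show π (X n) = ![π (X 0), π (X 1)] n by fin_cases n <;> rfl]
    exact mul_mem_span_of_relations c hxy hx3 hy3 hp n

lemma linearIndependent_mk_focalMonomial :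
    LinearIndependent K (Ideal.Quotient.mkₐ K (focalIdeal c) ∘ focalMonomial) := by
  rw [Fintype.linearIndependent_iff]
  intro f hf
  have hq : ∑ i, f i • focalMonomial i ∈ focalIdeal c := by
    rw [← Ideal.Quotient.eq_zero_iff_mem, ← Ideal.Quotient.mkₐ_eq_mk K]
    simpa [map_sum] using hf
  have hx : (Polynomial.X ^ 3 : Polynomial K) ∣ Polynomial.C (f 0)
      + Polynomial.C (f 1) * Polynomial.X + Polynomial.C (f 2) * Polynomial.X ^ 2 := by
    simpa [Fin.sum_univ_five, focalMonomial, Polynomial.smul_eq_C_mul] using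
      X_pow_three_dvd_aeval_of_mem_focalIdeal c hq
  have hy : Polynomial.X ^ 3 + Polynomial.C c * Polynomial.X ∣ Polynomial.C (f 0)
      + Polynomial.C (f 3) * Polynomial.X + Polynomial.C (f 4) * Polynomial.X ^ 2 := by
    simpa [Fin.sum_univ_five, focalMonomial, Polynomial.smul_eq_C_mul] using
      X_pow_three_add_C_mul_X_dvd_aeval_of_mem_focalIdeal c hq
  have hdeg : (Polynomial.X ^ 3 + Polynomial.C c * Polynomial.X).degree = 3 := by compute_degree!
  obtain ⟨h0, h1, h2⟩ :=
    Polynomial.coeffs_eq_zero_of_dvd_quadratic (by rw [Polynomial.degree_X_pow]; decide) hx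
  obtain ⟨-, h3, h4⟩ := Polynomial.coeffs_eq_zero_of_dvd_quadratic (by rw [hdeg]; decide) hy
  intro i
  fin_cases i <;> assumption

def focalBasis : Module.Basis (Fin 5) K (MvPolynomial (Fin 2) K ⧸ focalIdeal c) :=
  .mk (linearIndependent_mk_focalMonomial c) (span_range_mk_focalMonomial c).ge

lemma finrank_quotient_focalIdeal :
    Module.finrank K (MvPolynomial (Fin 2) K ⧸ focalIdeal c) = 5 := by
  rw [Module.finrank_eq_card_basis (focalBasis c), Fintype.card_fin]

end FocalIdeal

section FocalPhase

variable {K : Type*}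

def focalPhase [CommRing K] (a b : K) : MvPolynomial (Fin 2) K :=
  C (a ^ 4) * X 0 ^ 4 + C (4 * b * (a - b)) * X 1 ^ 2 + C (2 * a ^ 3 * b) * (X 0 ^ 2 * X 1 ^ 2)
    + C (a ^ 2 * b ^ 2) * X 1 ^ 4

lemma pderiv_zero_focalPhase [CommRing K] (a b : K) :
    pderiv 0 (focalPhase a b) = C (4 * a ^ 4) * X 0 ^ 3 + C (4 * a ^ 3 * b) * (X 0 * X 1 ^ 2) := by
  simp only [focalPhase, map_add, pderiv_C_mul]
  simp only [pderiv_mul, pderiv_pow, pderiv_X_self, pderiv_X_of_ne one_ne_zero, map_mul, map_pow,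
    map_ofNat]
  ring

lemma pderiv_one_focalPhase [CommRing K] (a b : K) :
    pderiv 1 (focalPhase a b) = C (8 * b * (a - b)) * X 1 + C (4 * a ^ 3 * b) * (X 0 ^ 2 * X 1)
      + C (4 * a ^ 2 * b ^ 2) * X 1 ^ 3 := by
  simp only [focalPhase, map_add, pderiv_C_mul]
  simp only [pderiv_mul, pderiv_pow, pderiv_X_self, pderiv_X_of_ne zero_ne_one, map_mul, map_pow,
    map_sub, map_ofNat]
  ring

lemma X_zero_mul_pderiv_one_sub_X_one_mul_pderiv_zero_focalPhase [CommRing K] (a b : K) :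
    C a * X 0 * pderiv 1 (focalPhase a b) - C b * X 1 * pderiv 0 (focalPhase a b)
      = C (8 * a * b * (a - b)) * (X 0 * X 1) := by
  simp only [pderiv_zero_focalPhase, pderiv_one_focalPhase, map_mul, map_pow, map_sub, map_ofNat]
  ring

lemma span_range_pderiv_focalPhase [Field K] (h2 : (2 : K) ≠ 0) {a b c : K} (ha : a ≠ 0)
    (hb : b ≠ 0) (hab : a ≠ b) (hc : a ^ 2 * b * c = 2 * (a - b)) :
    Ideal.span (Set.range fun i => pderiv i (focalPhase a b)) = focalIdeal c := by
  set P₀ := pderiv 0 (focalPhase a b)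
  set P₁ := pderiv 1 (focalPhase a b)
  have hcC : (C a ^ 2 * C b * C c : MvPolynomial (Fin 2) K) = 2 * (C a - C b) := by
    simpa [map_ofNat] using congrArg C hc
  have hP₀ : P₀ = C (4 * a ^ 4) * X 0 ^ 3 + C (4 * a ^ 3 * b) * X 1 * (X 0 * X 1) := by
    simp only [P₀, pderiv_zero_focalPhase]; ring
  have hP₁ : P₁ = C (4 * a ^ 2 * b ^ 2) * (X 1 ^ 3 + C c * X 1)
      + C (4 * a ^ 3 * b) * X 0 * (X 0 * X 1) := by
    simp only [P₁, pderiv_one_focalPhase, map_mul, map_pow, map_sub, map_ofNat]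
    linear_combination (-4 * C b * X 1) * hcC
  have hrange : (Set.range fun i => pderiv i (focalPhase a b)) = {P₀, P₁} := by
    ext; simp [Fin.exists_fin_two, eq_comm, P₀, P₁]
  have h4 : (4 : K) ≠ 0 := by have := mul_ne_zero h2 h2; norm_num at this; exact this
  have h8 : (8 : K) ≠ 0 := by have := mul_ne_zero h2 h4; norm_num at this; exact this
  have hunit {d : K} (hd : d ≠ 0) {p : MvPolynomial (Fin 2) K} {I : Ideal _} :
      C d * p ∈ I ↔ p ∈ I :=
    I.unit_mul_mem_iff_mem (hd.isUnit.map C)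
  obtain ⟨hxyI, hx3I, hy3I⟩ := focalIdeal_le_iff.1 (le_refl (focalIdeal c))
  rw [hrange]
  apply le_antisymm
  · refine Ideal.span_le.2 (Set.insert_subset_iff.2 ⟨?_, Set.singleton_subset_iff.2 ?_⟩)
    · rw [SetLike.mem_coe, hP₀]
      exact add_mem (Ideal.mul_mem_left _ _ hx3I) (Ideal.mul_mem_left _ _ hxyI)
    · rw [SetLike.mem_coe, hP₁]
      exact add_mem (Ideal.mul_mem_left _ _ hy3I) (Ideal.mul_mem_left _ _ hxyI)
  · have hP₀J : P₀ ∈ Ideal.span {P₀, P₁} := Ideal.subset_span (by simp)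
    have hP₁J : P₁ ∈ Ideal.span {P₀, P₁} := Ideal.subset_span (by simp)
    have hxyJ : X 0 * X 1 ∈ Ideal.span {P₀, P₁} := by
      refine (hunit (d := 8 * a * b * (a - b)) (by simp [ha, hb, sub_eq_zero, hab, h8])).1 ?_
      rw [← X_zero_mul_pderiv_one_sub_X_one_mul_pderiv_zero_focalPhase]
      exact sub_mem (Ideal.mul_mem_left _ _ hP₁J) (Ideal.mul_mem_left _ _ hP₀J)
    refine focalIdeal_le_iff.2 ⟨hxyJ, ?_, ?_⟩
    · refine (hunit (d := 4 * a ^ 4) (by simp [ha, h4])).1 ?_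
      rw [eq_sub_of_add_eq hP₀.symm]
      exact sub_mem hP₀J (Ideal.mul_mem_left _ _ hxyJ)
    · refine (hunit (d := 4 * a ^ 2 * b ^ 2) (by simp [ha, hb, h4])).1 ?_
      rw [eq_sub_of_add_eq hP₁.symm]
      exact sub_mem hP₁J (Ideal.mul_mem_left _ _ hxyJ)

end FocalPhase

end

/-- For `0 < k₁ < k₂` and `g = k₁⁴z₁⁴ + 4k₂(k₁−k₂)z₂² + 2k₁³k₂z₁²z₂² + k₁²k₂²z₂⁴`
(i.e. `4k₁²·Ψ(0,0,1/k₁,1/k₁,z)`, the phase function of `F = −(k₁z₁²+k₂z₂²)/2` at the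
focal point up to the nonzero constant `4k₁²`), the quotient `ℂ[z₁,z₂]/J(g)` is a
`ℂ`-vector space of dimension exactly `5`: the global Milnor number `μ` at the focal
point equals `5`. -/
theorem statement15 (k₁ k₂ : ℝ) (hk₁ : 0 < k₁) (hk : k₁ < k₂)
    (g : MvPolynomial (Fin 2) ℂ)
    (hg : g = C ((k₁ : ℂ) ^ 4) * X 0 ^ 4
      + C (4 * (k₂ : ℂ) * ((k₁ : ℂ) - (k₂ : ℂ))) * X 1 ^ 2
      + C (2 * (k₁ : ℂ) ^ 3 * (k₂ : ℂ)) * (X 0 ^ 2 * X 1 ^ 2)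
      + C ((k₁ : ℂ) ^ 2 * (k₂ : ℂ) ^ 2) * X 1 ^ 4) :
    FiniteDimensional ℂ (MvPolynomial (Fin 2) ℂ ⧸ jacobianIdeal g) ∧
      Module.finrank ℂ (MvPolynomial (Fin 2) ℂ ⧸ jacobianIdeal g) = 5 := by
  have ha : (k₁ : ℂ) ≠ 0 := by exact_mod_cast hk₁.ne'
  have hb : (k₂ : ℂ) ≠ 0 := by exact_mod_cast (hk₁.trans hk).ne'
  have hab : (k₁ : ℂ) ≠ k₂ := by exact_mod_cast hk.ne
  have hJ : jacobianIdeal g = focalIdeal (2 * (k₁ - k₂) / (k₁ ^ 2 * k₂) : ℂ) :=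
    hg ▸ span_range_pderiv_focalPhase two_ne_zero ha hb hab (by field_simp)
  rw [hJ]
  exact ⟨.of_basis (focalBasis _), finrank_quotient_focalIdeal _⟩
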